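/- arXiv:2507.05644 — 2 statements merged into one kernel-verified Lean document; each statement's English description precedes it below -/
import Mathlib

section
/- Let n, d, d' be positive integers and λ > 0. For each i = 1,…,n let h_i ∈ ℝ^d and let ℓ_i : ℝ^{d'} → ℝ be differentiable. Define the regularized loss L_λ : ℝ^{d'×d} → ℝ by L_λ(W) = (1/n)·Σ_{i=1}^n ℓ_i(W h_i) + (λ/2)·‖W‖_F². If W ∈ ℝ^{d'×d} is a critical point of L_λ (the total derivative of L_λ at W vanishes), then W W^⊤ = −(1/(nλ))·Σ_{i=1}^n (W h_i)(∇ℓ_i(W h_i))^⊤, where ∇ℓ_i(W h_i) ∈ ℝ^{d'} is the gradient of ℓ_i at W h_i and (W h_i)(∇ℓ_i(W h_i))^⊤ denotes the d'×d' outer-product matrix. -/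
open Matrix

attribute [local instance] Matrix.frobeniusSeminormedAddCommGroup
  Matrix.frobeniusNormedAddCommGroup Matrix.frobeniusNormedSpace

/-- The gradient of a function `f : ℝ^k → ℝ`, as a plain vector `Fin k → ℝ`. -/
noncomputable def grad {k : ℕ} (f : EuclideanSpace ℝ (Fin k) → ℝ) (x : Fin k → ℝ) :
    Fin k → ℝ :=
  WithLp.equiv 2 (Fin k → ℝ) <| gradient f ((WithLp.equiv 2 (Fin k → ℝ)).symm x)

/-! The matrix gradient of `V ↦ ℓ (V x)` at `W` is the outer product `∇ℓ(W x) xᵀ`, and that of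
`‖V‖_F²` is `2 W`. Criticality of the regularized loss therefore reads
`λ W = -(1/n) ∑ i, ∇ℓ_i(W h_i) h_iᵀ`; substituting this for the right-hand factor of `W Wᵀ`
gives `W Wᵀ = -(1/(nλ)) ∑ i, (W h_i) ∇ℓ_i(W h_i)ᵀ`. -/

section MatrixGradient

variable {m n : Type*} [Fintype m] [Fintype n]

/-- `HasFDerivAt f (frobeniusPairing G) W` says that `G` is the gradient of `f` at `W` with respect
to the Frobenius inner product. -/
noncomputable def frobeniusPairing : Matrix m n ℝ →ₗ[ℝ] Matrix m n ℝ →L[ℝ] ℝ :=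
  LinearMap.toContinuousLinearMap.toLinearMap ∘ₗ
    LinearMap.mk₂ ℝ (fun G E => ∑ a, ∑ b, G a b * E a b)
      (fun _ _ _ => by simp only [Matrix.add_apply, add_mul, Finset.sum_add_distrib])
      (fun _ _ _ => by simp [Finset.mul_sum, mul_assoc])
      (fun _ _ _ => by simp only [Matrix.add_apply, mul_add, Finset.sum_add_distrib])
      (fun _ _ _ => by simp [Finset.mul_sum, mul_left_comm])

theorem frobeniusPairing_apply (G E : Matrix m n ℝ) :
    frobeniusPairing G E = ∑ a, ∑ b, G a b * E a b :=
  rfl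

theorem frobeniusPairing_single [DecidableEq m] [DecidableEq n] (G : Matrix m n ℝ) (a : m)
    (b : n) : frobeniusPairing G (single a b 1) = G a b := by
  simp [frobeniusPairing_apply, single_apply, ite_and]

theorem frobeniusPairing_injective :
    Function.Injective (frobeniusPairing : Matrix m n ℝ →ₗ[ℝ] Matrix m n ℝ →L[ℝ] ℝ) := by
  classical
  intro G G' hG
  ext a b
  rw [← frobeniusPairing_single G, ← frobeniusPairing_single G', hG]

theorem hasFDerivAt_comp_mulVec {f : EuclideanSpace ℝ m → ℝ} {W : Matrix m n ℝ} {x : n → ℝ}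
    (hf : DifferentiableAt ℝ f (WithLp.toLp 2 (W *ᵥ x))) :
    HasFDerivAt (fun V : Matrix m n ℝ => f (WithLp.toLp 2 (V *ᵥ x)))
      (frobeniusPairing (vecMulVec (gradient f (WithLp.toLp 2 (W *ᵥ x))).ofLp x)) W := by
  set g := gradient f (WithLp.toLp 2 (W *ᵥ x))
  let mulVecCLM : Matrix m n ℝ →L[ℝ] EuclideanSpace ℝ m := LinearMap.toContinuousLinearMap
    ((WithLp.linearEquiv 2 ℝ (m → ℝ)).symm.toLinearMap ∘ₗ (mulVecBilin ℝ ℝ).flip x)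
  refine (hf.hasGradientAt.hasFDerivAt.comp W mulVecCLM.hasFDerivAt).congr_fderiv ?_
  ext E
  show inner ℝ g (WithLp.toLp 2 (E *ᵥ x)) = ∑ a, ∑ b, vecMulVec g.ofLp x a b * E a b
  simp only [PiLp.inner_apply, RCLike.inner_apply, conj_trivial, mulVec, dotProduct,
    vecMulVec_apply, Finset.sum_mul]
  refine Finset.sum_congr rfl fun a _ => Finset.sum_congr rfl fun b _ => ?_
  ring

theorem hasFDerivAt_sum_sq_entries (W : Matrix m n ℝ) :
    HasFDerivAt (fun V : Matrix m n ℝ => ∑ a, ∑ b, V a b ^ 2) (frobeniusPairing (2 • W)) W := by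
  have hentry (a : m) (b : n) :=
    ((entryLinearMap ℝ ℝ a b).toContinuousLinearMap.hasFDerivAt (x := W)).pow 2
  refine (HasFDerivAt.fun_sum fun a _ => HasFDerivAt.fun_sum fun b _ => hentry a b).congr_fderiv ?_
  ext E
  simp only [FunLike.coe_sum, Finset.sum_apply]
  refine Finset.sum_congr rfl fun a _ => Finset.sum_congr rfl fun b _ => ?_
  show (2 • W a b ^ (2 - 1)) * E a b = (2 • W a b) * E a b
  simp

end MatrixGradient

theorem mul_transpose_self_of_smul_sum_vecMulVec_add_smul_eq_zero {m n ι : Type*} [Fintype n]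
    [Fintype ι] {c lam : ℝ} (hlam : lam ≠ 0) {W : Matrix m n ℝ} {u : ι → m → ℝ}
    {v : ι → n → ℝ} (h : c • ∑ i, vecMulVec (u i) (v i) + lam • W = 0) :
    W * Wᵀ = (-(c / lam)) • ∑ i, vecMulVec (W *ᵥ v i) (u i) := by
  have hW : W = (-(c / lam)) • ∑ i, vecMulVec (u i) (v i) := by
    rw [← inv_smul_smul₀ hlam W, eq_neg_of_add_eq_zero_right h, smul_neg, smul_smul, neg_smul,
      inv_mul_eq_div]
  nth_rewrite 2 [hW]
  simp only [transpose_smul, transpose_sum, transpose_vecMulVec, Matrix.mul_smul, Matrix.mul_sum,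
    mul_vecMulVec]

theorem backward_features_at_convergence_general
    (n d d' : ℕ)
    (lam : ℝ) (hlam : 0 < lam)
    (h : Fin n → Fin d → ℝ)
    (ℓ : Fin n → EuclideanSpace ℝ (Fin d') → ℝ)
    (hdiff : ∀ i, Differentiable ℝ (ℓ i))
    (W : Matrix (Fin d') (Fin d) ℝ)
    (hcrit : fderiv ℝ
      (fun V : Matrix (Fin d') (Fin d) ℝ =>
        (1 / n : ℝ) * ∑ i, ℓ i ((WithLp.equiv 2 (Fin d' → ℝ)).symm (V.mulVec (h i)))
          + (lam / 2) * ∑ a : Fin d', ∑ b : Fin d, V a b ^ 2) W = 0) :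
    W * Wᵀ = (-(1 / (n * lam))) •
      ∑ i, Matrix.vecMulVec (W.mulVec (h i)) (grad (ℓ i) (W.mulVec (h i))) := by
  have hloss :=
    ((HasFDerivAt.fun_sum (u := Finset.univ) fun i _ =>
      hasFDerivAt_comp_mulVec (x := h i) (hdiff i _)).const_mul (1 / n : ℝ)).add
      ((hasFDerivAt_sum_sq_entries W).const_mul (lam / 2))
  have hstat : (1 / n : ℝ) • ∑ i, vecMulVec (grad (ℓ i) (W *ᵥ h i)) (h i) + lam • W = 0 := by
    have hreg : (lam / 2) • (2 • W) = lam • W := by module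
    apply frobeniusPairing_injective
    rw [map_add, map_smul, map_sum, map_zero, ← hreg, map_smul]
    exact hloss.fderiv.symm.trans hcrit
  rw [mul_transpose_self_of_smul_sum_vecMulVec_add_smul_eq_zero hlam.ne' hstat, div_div]

/-- **Backward Features at Convergence Theorem (bFACT).** If `W` is a critical point of the
regularized loss `L_λ(W) = (1/n) ∑ i, ℓ i (W h_i) + (λ/2) ‖W‖_F²`, then
`W Wᵀ = -(1/(nλ)) ∑ i (W h_i) (∇ℓ_i(W h_i))ᵀ`. -/
theorem backward_features_at_convergence
    (n d d' : ℕ) (hn : 0 < n) (hd : 0 < d) (hd' : 0 < d')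
    (lam : ℝ) (hlam : 0 < lam)
    (h : Fin n → Fin d → ℝ)
    (ℓ : Fin n → EuclideanSpace ℝ (Fin d') → ℝ)
    (hdiff : ∀ i, Differentiable ℝ (ℓ i))
    (W : Matrix (Fin d') (Fin d) ℝ)
    (hcrit : fderiv ℝ
      (fun V : Matrix (Fin d') (Fin d) ℝ =>
        (1 / n : ℝ) * ∑ i, ℓ i ((WithLp.equiv 2 (Fin d' → ℝ)).symm (V.mulVec (h i)))
          + (lam / 2) * ∑ a : Fin d', ∑ b : Fin d, V a b ^ 2) W = 0) :
    W * Wᵀ = (-(1 / (n * lam))) •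
      ∑ i, Matrix.vecMulVec (W.mulVec (h i)) (grad (ℓ i) (W.mulVec (h i))) :=
  backward_features_at_convergence_general n d d' lam hlam h ℓ hdiff W hcrit
end

section
/- Let n, c, d be positive integers, λ > 0, let k : ℝ → ℝ be differentiable, let M ∈ ℝ^{d×d} be symmetric, and let x₁, …, x_n ∈ ℝ^d, y₁, …, y_n ∈ ℝ^c. Let G ∈ ℝ^{n×n} be the Gram matrix G_{ij} = k(x_i^⊤ M x_j), assume G is symmetric positive semidefinite, let Y ∈ ℝ^{n×c} have rows y_i, and set α := (G + nλ·I)^{−1} Y with rows α_i ∈ ℝ^c. Define f̂(x) = Σ_{j=1}^n k(x^⊤ M x_j) α_j, the loss ℓ(ŷ, y) = (1/2)‖ŷ − y‖², and the FACT matrix F := −(1/(nλ))·Σ_{i=1}^n (∇_x [ℓ(f̂(x), y_i)]|_{x = x_i}) x_i^⊤ ∈ ℝ^{d×d}. Then F·M^⊤ = Σ_{i,j=1}^n k'(x_i^⊤ M x_j) · (M x_i) α_i^⊤ α_j (x_j^⊤ M^⊤). -/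
open Matrix

/-!
Since `(G + nλ I) α = Y`, the residual of the predictor at a training point is
`f̂(xᵢ) - yᵢ = -nλ αᵢ`. The gradient of the loss at `xᵢ` is
`∑ⱼ k'(xᵢᵀ M xⱼ) ⟪f̂(xᵢ) - yᵢ, αⱼ⟫ M xⱼ`, so the factor `-1/(nλ)` of `F` cancels and
`F Mᵀ = ∑ᵢⱼ k'(xᵢᵀ M xⱼ) ⟪αᵢ, αⱼ⟫ (M xⱼ)(M xᵢ)ᵀ`. Exchanging `i` and `j`, which the symmetry
of `M` permits, gives the claim.
-/

open WithLp

theorem Matrix.IsSymm.dotProduct_mulVec_comm {n R : Type*} [Fintype n] [CommSemiring R]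
    {M : Matrix n n R} (hM : M.IsSymm) (u v : n → R) : u ⬝ᵥ M *ᵥ v = v ⬝ᵥ M *ᵥ u := by
  rw [dotProduct_mulVec, ← mulVec_transpose, hM.eq, dotProduct_comm]

theorem Matrix.sum_vecMulVec {ι m n α : Type*} [NonUnitalNonAssocSemiring α] (s : Finset ι)
    (u : ι → m → α) (v : n → α) : vecMulVec (∑ i ∈ s, u i) v = ∑ i ∈ s, vecMulVec (u i) v := by
  ext
  simp only [vecMulVec_apply, Finset.sum_apply, Matrix.sum_apply, Finset.sum_mul]

theorem Matrix.mul_inv_add_smul_one_mul_sub {n m R : Type*} [Fintype n] [DecidableEq n]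
    [CommRing R] {G : Matrix n n R} {s : R} (h : IsUnit (G + s • 1).det) (Y : Matrix n m R) :
    G * ((G + s • 1)⁻¹ * Y) - Y = -(s • ((G + s • 1)⁻¹ * Y)) := by
  have hY := mul_nonsing_inv_cancel_left _ Y h
  rw [Matrix.add_mul, smul_mul, Matrix.one_mul] at hY
  nth_rw 2 [← hY]
  abel

section Calculus

variable {E : Type*} [NormedAddCommGroup E]

theorem HasFDerivAt.half_sum_sq_sub [NormedSpace ℝ E] {ι : Type*} [Fintype ι] {g : ι → E → ℝ}
    {g' : ι → E →L[ℝ] ℝ} {x : E} (hg : ∀ i, HasFDerivAt (g i) (g' i) x) (y : ι → ℝ) :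
    HasFDerivAt (fun z => 1 / 2 * ∑ i, (g i z - y i) ^ 2) (∑ i, (g i x - y i) • g' i) x := by
  refine ((HasFDerivAt.fun_sum fun i _ => ((hg i).sub_const (y i)).pow 2).const_mul
    (1 / 2 : ℝ)).congr_fderiv ?_
  ext v
  simp only [_root_.sum_apply, _root_.smul_apply, smul_eq_mul, Finset.mul_sum]
  exact Finset.sum_congr rfl fun i _ => by ring

theorem hasFDerivAt_sum_comp_inner [InnerProductSpace ℝ E] {ι : Type*} [Fintype ι] {k : ℝ → ℝ}
    (w : ι → E) (a : ι → ℝ) {x : E} (hk : ∀ j, DifferentiableAt ℝ k (inner ℝ (w j) x)) :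
    HasFDerivAt (fun z => ∑ j, k (inner ℝ (w j) z) * a j)
      (∑ j, a j • deriv k (inner ℝ (w j) x) • innerSL ℝ (w j)) x :=
  HasFDerivAt.fun_sum fun j _ =>
    ((hk j).hasDerivAt.comp_hasFDerivAt x (innerSL ℝ (w j)).hasFDerivAt).mul_const (a j)

end Calculus

theorem grad_apply_of_hasFDerivAt {d : ℕ} {f : EuclideanSpace ℝ (Fin d) → ℝ}
    {f' : EuclideanSpace ℝ (Fin d) →L[ℝ] ℝ} {x : Fin d → ℝ} (hf : HasFDerivAt f f' (toLp 2 x))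
    (l : Fin d) : grad f x l = f' (EuclideanSpace.single l 1) := by
  rw [← hf.fderiv, ← InnerProductSpace.toDual_symm_apply, EuclideanSpace.inner_single_right]
  simp [grad, gradient]

theorem grad_half_sum_sq_kernel_predictor {d n c : ℕ} {k : ℝ → ℝ} (w : Fin n → Fin d → ℝ)
    (α : Matrix (Fin n) (Fin c) ℝ) (y : Fin c → ℝ) {x : Fin d → ℝ}
    (hk : ∀ j, DifferentiableAt ℝ k (x ⬝ᵥ w j)) :
    grad (fun z => 1 / 2 * ∑ kk, (∑ j, k (ofLp z ⬝ᵥ w j) * α j kk - y kk) ^ 2) x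
      = ∑ j, (deriv k (x ⬝ᵥ w j) * (((fun j => k (x ⬝ᵥ w j)) ᵥ* α - y) ⬝ᵥ α j)) • w j := by
  have hpred : ∀ kk, HasFDerivAt (fun z => ∑ j, k (ofLp z ⬝ᵥ w j) * α j kk)
      (∑ j, α j kk • deriv k (x ⬝ᵥ w j) • innerSL ℝ (toLp 2 (w j))) (toLp 2 x) := fun kk =>
    hasFDerivAt_sum_comp_inner (fun j => toLp 2 (w j)) (fun j => α j kk) hk
  ext l
  rw [grad_apply_of_hasFDerivAt (HasFDerivAt.half_sum_sq_sub hpred y)]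
  simp only [_root_.sum_apply, _root_.smul_apply, coe_innerSL_apply,
    EuclideanSpace.inner_single_right, Finset.sum_apply, Pi.smul_apply, Pi.sub_apply, smul_eq_mul,
    vecMul, dotProduct, Finset.mul_sum, Finset.sum_mul]
  rw [Finset.sum_comm]
  refine Finset.sum_congr rfl fun j _ => Finset.sum_congr rfl fun kk _ => ?_
  simp only [Real.ringHom_apply, one_mul]
  ring

theorem fact_inner_product_kernel_general
    (n c d : ℕ) (hn : 0 < n) (lam : ℝ) (hlam : 0 < lam)
    (k : ℝ → ℝ) (hk : Differentiable ℝ k)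
    (M : Matrix (Fin d) (Fin d) ℝ) (hM : M.IsSymm)
    (xs : Fin n → Fin d → ℝ)
    (G : Matrix (Fin n) (Fin n) ℝ)
    (hG : G = Matrix.of fun i j => k (xs i ⬝ᵥ M.mulVec (xs j)))
    (hGpsd : G.PosSemidef)
    (Y : Matrix (Fin n) (Fin c) ℝ)
    (α : Matrix (Fin n) (Fin c) ℝ)
    (hα : α = (G + ((n : ℝ) * lam) • (1 : Matrix (Fin n) (Fin n) ℝ))⁻¹ * Y)
    (fhat : EuclideanSpace ℝ (Fin d) → Fin c → ℝ)
    (hfhat : ∀ x kk, fhat x kk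
      = ∑ j, k ((WithLp.equiv 2 (Fin d → ℝ)) x ⬝ᵥ M.mulVec (xs j)) * α j kk)
    (F : Matrix (Fin d) (Fin d) ℝ)
    (hF : F = (-(1 / ((n : ℝ) * lam))) •
      ∑ i, Matrix.vecMulVec
        (grad (fun x => (1 / 2 : ℝ) * ∑ kk, (fhat x kk - Y i kk) ^ 2) (xs i)) (xs i)) :
    F * Mᵀ = ∑ i, ∑ j,
      deriv k (xs i ⬝ᵥ M.mulVec (xs j)) •
        (∑ kk, α i kk * α j kk) •
          Matrix.vecMulVec (M.mulVec (xs i)) (M.mulVec (xs j)) := by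
  set s : ℝ := n * lam
  have hs : 0 < s := by positivity
  have hpd : (G + s • 1).PosDef := PosDef.posSemidef_add hGpsd (PosDef.one.smul hs)
  have hres : ∀ i, (fun j => k (xs i ⬝ᵥ M *ᵥ xs j)) ᵥ* α - Y i = -(s • α i) := fun i => by
    have := congrFun (mul_inv_add_smul_one_mul_sub ((isUnit_iff_isUnit_det _).mp hpd.isUnit) Y) i
    rwa [← hα, hG] at this
  have hgrad : ∀ i, grad (fun x => 1 / 2 * ∑ kk, (fhat x kk - Y i kk) ^ 2) (xs i)
      = -s • ∑ j, (deriv k (xs i ⬝ᵥ M *ᵥ xs j) * (α i ⬝ᵥ α j)) • M *ᵥ xs j := fun i => by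
    simp only [hfhat, WithLp.equiv_apply]
    rw [grad_half_sum_sq_kernel_predictor _ _ _ fun j => hk _, hres i]
    simp [Finset.smul_sum, smul_smul, mul_left_comm s]
  calc F * Mᵀ
      = ∑ i, ∑ j, deriv k (xs i ⬝ᵥ M *ᵥ xs j) • (α i ⬝ᵥ α j) •
          vecMulVec (M *ᵥ xs j) (M *ᵥ xs i) := by
        rw [hF, Matrix.smul_mul, Finset.sum_mul]
        simp_rw [hgrad, vecMulVec_mul, vecMul_transpose, smul_vecMulVec, sum_vecMulVec,
          smul_vecMulVec, Finset.smul_sum, smul_smul]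
        refine Finset.sum_congr rfl fun i _ => Finset.sum_congr rfl fun j _ => ?_
        field_simp
    _ = _ := by
      rw [Finset.sum_comm]
      refine Finset.sum_congr rfl fun i _ => Finset.sum_congr rfl fun j _ => ?_
      rw [hM.dotProduct_mulVec_comm (xs j), dotProduct_comm (α j)]
      rfl

/-- **FACT matrix of an inner-product-kernel ridge regression predictor.** For the kernel
`K(x, x') = k(xᵀ M x')` with `M` symmetric, `α = (G + nλ I)⁻¹ Y`, predictor
`f̂(x) = ∑ j k(xᵀ M x_j) α_j` and squared loss `ℓ(ŷ, y) = ½‖ŷ - y‖²`, the FACT matrix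
`F = -(1/(nλ)) ∑ i (∇_x ℓ(f̂(x), y_i)|_{x_i}) x_iᵀ` satisfies
`F Mᵀ = ∑_{i,j} k'(x_iᵀ M x_j) (M x_i) α_iᵀ α_j (x_jᵀ Mᵀ)`. -/
theorem fact_inner_product_kernel
    (n c d : ℕ) (hn : 0 < n) (hc : 0 < c) (hd : 0 < d) (lam : ℝ) (hlam : 0 < lam)
    (k : ℝ → ℝ) (hk : Differentiable ℝ k)
    (M : Matrix (Fin d) (Fin d) ℝ) (hM : M.IsSymm)
    (xs : Fin n → Fin d → ℝ)
    (G : Matrix (Fin n) (Fin n) ℝ)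
    (hG : G = Matrix.of fun i j => k (xs i ⬝ᵥ M.mulVec (xs j)))
    (hGpsd : G.PosSemidef)
    (Y : Matrix (Fin n) (Fin c) ℝ)
    (α : Matrix (Fin n) (Fin c) ℝ)
    (hα : α = (G + ((n : ℝ) * lam) • (1 : Matrix (Fin n) (Fin n) ℝ))⁻¹ * Y)
    (fhat : EuclideanSpace ℝ (Fin d) → Fin c → ℝ)
    (hfhat : ∀ x kk, fhat x kk
      = ∑ j, k ((WithLp.equiv 2 (Fin d → ℝ)) x ⬝ᵥ M.mulVec (xs j)) * α j kk)
    (F : Matrix (Fin d) (Fin d) ℝ)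
    (hF : F = (-(1 / ((n : ℝ) * lam))) •
      ∑ i, Matrix.vecMulVec
        (grad (fun x => (1 / 2 : ℝ) * ∑ kk, (fhat x kk - Y i kk) ^ 2) (xs i)) (xs i)) :
    F * Mᵀ = ∑ i, ∑ j,
      deriv k (xs i ⬝ᵥ M.mulVec (xs j)) •
        (∑ kk, α i kk * α j kk) •
          Matrix.vecMulVec (M.mulVec (xs i)) (M.mulVec (xs j)) :=
  fact_inner_product_kernel_general n c d hn lam hlam k hk M hM xs G hG hGpsd Y α hα fhat hfhat F hF
end
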